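/- Let (λ, μ, M, m) be an exact context. If λ: R → S or μ: R → T is a ring epimorphism, then the map γ: S ⊗_R T → M defined by s ⊗ t ↦ smt is an isomorphism of (S,T)-bimodules; in particular (λ, μ) is an exact pair. -/

import Mathlib

/-!
An exact context presents `M` as the cokernel of `R → S ⊕ T`, so `s m - m t ↦ s ⊗ 1 - 1 ⊗ t` is a
well-defined additive map `δ : M → S ⊗_R T` with `γ ∘ δ = id`. The other identity `δ ∘ γ = id`
amounts to `δ (s m t) = s ⊗ t`, i.e. to `δ` being `S`-linear (or `Tᵒᵖ`-linear). Now `δ` is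
visibly `λ(R)`-linear, and when `λ` is a ring epimorphism every `λ(R)`-linear additive map of
`S`-modules is `S`-linear, because `s ⊗ 1 = 1 ⊗ s` in `S ⊗_R S`: the ring maps
`s ↦ (s, s ⊗ 1 - 1 ⊗ s)` and `s ↦ (s, 0)` from `S` to the trivial extension `S ⋉ (S ⊗_R S)` agree
on `λ(R)`. The case of `μ` follows by passing to opposite rings.
-/

open MulOpposite
open scoped TensorProduct

universe u

/-- Tensor product over `R` of a right `R`-module and a left `R`-module. -/
noncomputable abbrev tensorOver (R : Type u) [Ring R] {A B : Type u}
    [AddCommGroup A] [AddCommGroup B]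
    (ract : A → R → A) (lact : R → B → B) : Type u :=
  (TensorProduct ℤ A B) ⧸
    AddSubgroup.closure {x : TensorProduct ℤ A B |
      ∃ (a : A) (r : R) (b : B), x = (ract a r) ⊗ₜ[ℤ] b - a ⊗ₜ[ℤ] (lact r b)}

/-- The class of the elementary tensor `a ⊗ b`. -/
noncomputable def tensorOver.mk (R : Type u) [Ring R] {A B : Type u}
    [AddCommGroup A] [AddCommGroup B]
    (ract : A → R → A) (lact : R → B → B) (a : A) (b : B) : tensorOver R ract lact :=
  QuotientAddGroup.mk (a ⊗ₜ[ℤ] b)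

namespace tensorOver

variable {R : Type u} [Ring R] {A B : Type u} [AddCommGroup A] [AddCommGroup B]
  {ract : A → R → A} {lact : R → B → B}

variable (ract lact) in
noncomputable def mkHom : A →+ B →+ tensorOver R ract lact :=
  AddMonoidHom.mk'
    (fun a => AddMonoidHom.mk' (tensorOver.mk R ract lact a) fun b b' =>
      congrArg QuotientAddGroup.mk (TensorProduct.tmul_add a b b'))
    fun a a' => AddMonoidHom.ext fun b =>
      congrArg QuotientAddGroup.mk (TensorProduct.add_tmul a a' b)

theorem mk_rel (a : A) (r : R) (b : B) :
    tensorOver.mk R ract lact (ract a r) b = tensorOver.mk R ract lact a (lact r b) :=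
  QuotientAddGroup.eq_iff_sub_mem.mpr (AddSubgroup.subset_closure ⟨a, r, b, rfl⟩)

@[elab_as_elim]
theorem induction_on {P : tensorOver R ract lact → Prop} (x : tensorOver R ract lact)
    (mk : ∀ a b, P (tensorOver.mk R ract lact a b)) (add : ∀ x y, P x → P y → P (x + y)) :
    P x := by
  induction x using QuotientAddGroup.induction_on with | _ z
  induction z using TensorProduct.induction_on with
  | zero => simpa only [tensorOver.mk, TensorProduct.zero_tmul] using mk 0 0
  | tmul a b => exact mk a b
  | add z z' hz hz' => exact add _ _ hz hz'

noncomputable def lift {C : Type*} [AddCommGroup C] (f : A →+ B →+ C)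
    (hf : ∀ a r b, f (ract a r) b = f a (lact r b)) : tensorOver R ract lact →+ C :=
  QuotientAddGroup.lift _
    (TensorProduct.liftAddHom f fun (n : ℤ) a b => by
      simp only [map_zsmul, AddMonoidHom.smul_apply]) <|
    (AddSubgroup.closure_le _).mpr <| by
      rintro _ ⟨a, r, b, rfl⟩
      simp [hf]

@[simp]
theorem lift_mk {C : Type*} [AddCommGroup C] (f : A →+ B →+ C)
    (hf : ∀ a r b, f (ract a r) b = f a (lact r b)) (a : A) (b : B) :
    lift f hf (tensorOver.mk R ract lact a b) = f a b := by
  simp [lift, tensorOver.mk]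

end tensorOver

section
variable {R S T : Type u} [Ring R] [Ring S] [Ring T]

/-- `S ⊗_R T`. -/
noncomputable abbrev TensST (lam : R →+* S) (mu : R →+* T) : Type u :=
  tensorOver R (fun (s : S) (r : R) => s * lam r) (fun (r : R) (t : T) => mu r * t)

/-- The elementary tensor `s ⊗ t` in `S ⊗_R T`. -/
noncomputable def eST (lam : R →+* S) (mu : R →+* T) (s : S) (t : T) : TensST lam mu :=
  tensorOver.mk R _ _ s t

/-- `(λ, μ, M, m)` is an exact context. -/
def IsExactContext {M : Type u} [AddCommGroup M] [Module S M] [Module Tᵐᵒᵖ M]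
    (lam : R →+* S) (mu : R →+* T) (m : M) : Prop :=
  Function.Injective (fun r : R => (lam r, mu r)) ∧
  (∀ (s : S) (t : T), s • m = op t • m ↔ ∃ r : R, lam r = s ∧ mu r = t) ∧
  (∀ x : M, ∃ (s : S) (t : T), x = s • m - op t • m)

/-- `(λ, μ)` is an exact pair: `(λ, μ, S ⊗_R T, 1 ⊗ 1)` is an exact context. -/
noncomputable def IsExactPair (lam : R →+* S) (mu : R →+* T) : Prop :=
  Function.Injective (fun r : R => (lam r, mu r)) ∧
  (∀ (s : S) (t : T), eST lam mu s 1 = eST lam mu 1 t ↔ ∃ r : R, lam r = s ∧ mu r = t) ∧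
  (∀ x : TensST lam mu, ∃ (s : S) (t : T), x = eST lam mu s 1 - eST lam mu 1 t)

section

variable {lam : R →+* S} {mu : R →+* T}

namespace TensST

variable (lam mu) in
noncomputable def eSTHom : S →+ T →+ TensST lam mu := tensorOver.mkHom _ _

@[simp]
theorem eSTHom_apply (s : S) (t : T) : eSTHom lam mu s t = eST lam mu s t := rfl

@[elab_as_elim]
theorem induction_on {P : TensST lam mu → Prop} (x : TensST lam mu)
    (eST : ∀ s t, P (eST lam mu s t)) (add : ∀ x y, P x → P y → P (x + y)) : P x :=
  tensorOver.induction_on x eST add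

theorem end_ext {f g : AddMonoid.End (TensST lam mu)}
    (h : ∀ s t, f (eST lam mu s t) = g (eST lam mu s t)) : f = g := by
  refine AddMonoid.End.ext _ fun x => ?_
  induction x using induction_on with
  | eST s t => exact h s t
  | add x y hx hy => rw [map_add, map_add, hx, hy]

@[simp]
theorem lift_eST {C : Type*} [AddCommGroup C] (f : S →+ T →+ C)
    (hf : ∀ a r b, f (a * lam r) b = f a (mu r * b)) (s : S) (t : T) :
    tensorOver.lift f hf (eST lam mu s t) = f s t :=
  tensorOver.lift_mk f hf s t

end TensST

open TensST

section eST

variable (s s' : S) (t t' : T)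

@[simp]
theorem eST_add_left : eST lam mu (s + s') t = eST lam mu s t + eST lam mu s' t :=
  DFunLike.congr_fun (map_add (eSTHom lam mu) s s') t

@[simp]
theorem eST_add_right : eST lam mu s (t + t') = eST lam mu s t + eST lam mu s t' :=
  map_add (eSTHom lam mu s) t t'

@[simp]
theorem eST_zero_left : eST lam mu 0 t = 0 := DFunLike.congr_fun (map_zero (eSTHom lam mu)) t

@[simp]
theorem eST_zero_right : eST lam mu s 0 = 0 := map_zero (eSTHom lam mu s)

theorem eST_mul_lam (r : R) : eST lam mu (s * lam r) t = eST lam mu s (mu r * t) :=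
  tensorOver.mk_rel s r t

theorem eST_lam_one (r : R) : eST lam mu (lam r) 1 = eST lam mu 1 (mu r) := by
  simpa using eST_mul_lam (lam := lam) (mu := mu) 1 1 r

end eST

namespace TensST

variable (lam mu) in
noncomputable def lmul (s : S) : AddMonoid.End (TensST lam mu) :=
  tensorOver.lift ((eSTHom lam mu).comp (AddMonoidHom.mulLeft s)) fun a r b => by
    simpa [mul_assoc] using eST_mul_lam (s * a) b r

variable (lam mu) in
noncomputable def rmul (t : Tᵐᵒᵖ) : AddMonoid.End (TensST lam mu) :=
  tensorOver.lift ((eSTHom lam mu).compl₂ (AddMonoidHom.mulRight (unop t))) fun a r b => by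
    simpa [mul_assoc] using eST_mul_lam a (b * unop t) r

@[simp]
theorem lmul_eST (s a : S) (b : T) : lmul lam mu s (eST lam mu a b) = eST lam mu (s * a) b :=
  lift_eST _ _ a b

@[simp]
theorem rmul_eST (t : Tᵐᵒᵖ) (a : S) (b : T) :
    rmul lam mu t (eST lam mu a b) = eST lam mu a (b * unop t) :=
  lift_eST _ _ a b

variable (lam mu) in
noncomputable def leftMul : S →+* AddMonoid.End (TensST lam mu) where
  toFun := lmul lam mu
  map_one' := end_ext fun a b => by simp
  map_mul' s s' := end_ext fun a b => by simp [mul_assoc]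
  map_zero' := end_ext fun a b => by simp
  map_add' s s' := end_ext fun a b => by
    change _ = lmul lam mu s _ + lmul lam mu s' _
    simp [add_mul]

variable (lam mu) in
noncomputable def rightMul : Tᵐᵒᵖ →+* AddMonoid.End (TensST lam mu) where
  toFun := rmul lam mu
  map_one' := end_ext fun a b => by simp
  map_mul' t t' := end_ext fun a b => by simp [mul_assoc]
  map_zero' := end_ext fun a b => by simp
  map_add' t t' := end_ext fun a b => by
    change _ = rmul lam mu t _ + rmul lam mu t' _
    simp [mul_add]

noncomputable instance : Module S (TensST lam mu) := Module.compHom _ (leftMul lam mu)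

noncomputable instance : Module Tᵐᵒᵖ (TensST lam mu) := Module.compHom _ (rightMul lam mu)

@[simp]
theorem smul_eST (s a : S) (b : T) : s • eST lam mu a b = eST lam mu (s * a) b :=
  lmul_eST s a b

@[simp]
theorem op_smul_eST (t : T) (a : S) (b : T) : op t • eST lam mu a b = eST lam mu a (b * t) :=
  rmul_eST (op t) a b

instance : SMulCommClass S Tᵐᵒᵖ (TensST lam mu) where
  smul_comm s t x := by
    induction t using MulOpposite.rec' with | _ t
    induction x using induction_on with
    | eST a b => simp
    | add x y hx hy => simp only [smul_add, hx, hy]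

end TensST

def RingHom.IsEpi (f : R →+* S) : Prop :=
  ∀ (U : Type u) [Ring U], ∀ g h : S →+* U, g.comp f = h.comp f → g = h

namespace RingHom.IsEpi

theorem op (h : lam.IsEpi) : (RingHom.op lam).IsEpi := by
  intro U _ f g hfg
  have key := h Uᵐᵒᵖ (RingHom.unop ((RingEquiv.opOp U).toRingHom.comp f))
    (RingHom.unop ((RingEquiv.opOp U).toRingHom.comp g)) <| by
      ext r
      exact congr(MulOpposite.op ($hfg (MulOpposite.op r)))
  ext x
  exact congr(MulOpposite.unop ($key (MulOpposite.unop x)))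

theorem eST_comm (h : lam.IsEpi) (s : S) : eST lam lam s 1 = eST lam lam 1 s := by
  let d : S → TensST lam lam := fun s => eST lam lam s 1 - eST lam lam 1 s
  let f : S →+* TrivSqZeroExt S (TensST lam lam) :=
    { toFun s := TrivSqZeroExt.inl s + TrivSqZeroExt.inr (d s)
      map_one' := by ext <;> simp [d]
      map_mul' a b := by ext <;> simp [d, smul_sub]
      map_zero' := by ext <;> simp [d]
      map_add' a b := by ext <;> simp [d]; abel }
  have hf : f.comp lam = (TrivSqZeroExt.inlHom S _).comp lam := by
    ext r <;> simp [f, d, eST_lam_one]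
  simpa [f, d, sub_eq_zero] using congr(TrivSqZeroExt.snd ($(h _ f _ hf) s))

theorem map_smul (h : lam.IsEpi) {M X : Type*} [AddCommGroup M] [Module S M] [AddCommGroup X]
    [Module S X] (D : M →+ X) (hD : ∀ r x, D (lam r • x) = lam r • D x) (s : S) (x : M) :
    D (s • x) = s • D x := by
  let Φ : TensST lam lam →+ X :=
    tensorOver.lift ((smulAddHom S X).compl₂ (D.comp ((smulAddHom S M).flip x))) fun a r b => by
      simp [mul_smul, hD]
  simpa [Φ] using congr(Φ $(h.eST_comm s)).symm

end RingHom.IsEpi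

section contextMap

variable {M : Type*} [AddCommGroup M] [Module S M] [Module Tᵐᵒᵖ M]

variable (S T) in
def contextMap (m : M) : S × T →+ M :=
  AddMonoidHom.mk' (fun p => p.1 • m - op p.2 • m) fun p q => by
    simp only [Prod.fst_add, Prod.snd_add, add_smul, op_add]
    abel

theorem contextMap_apply (m : M) (p : S × T) : contextMap S T m p = p.1 • m - op p.2 • m := rfl

variable [SMulCommClass S Tᵐᵒᵖ M] {m : M} (hm : ∀ r, lam r • m = op (mu r) • m) (r : R)
  (p : S × T)
include hm

theorem lam_smul_contextMap :
    lam r • contextMap S T m p = contextMap S T m (lam r * p.1, mu r * p.2) := by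
  simp [contextMap_apply, smul_sub, mul_smul, smul_comm (lam r) (op p.2), hm]

theorem op_mu_smul_contextMap :
    op (mu r) • contextMap S T m p = contextMap S T m (p.1 * lam r, p.2 * mu r) := by
  simp [contextMap_apply, smul_sub, mul_smul, (smul_comm p.1 (op (mu r)) m).symm, hm]

end contextMap

theorem lam_smul_eST_one_one (r : R) :
    lam r • eST lam mu 1 1 = op (mu r) • eST lam mu 1 1 := by
  simpa using eST_lam_one r

namespace IsExactContext

variable {M : Type u} [AddCommGroup M] [Module S M] [Module Tᵐᵒᵖ M] {m : M}
  (h : IsExactContext lam mu m)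
include h

theorem lam_smul (r : R) : lam r • m = op (mu r) • m := (h.2.1 _ _).2 ⟨r, rfl, rfl⟩

theorem contextMap_surjective : Function.Surjective (contextMap S T m) := fun x => by
  obtain ⟨s, t, rfl⟩ := h.2.2 x
  exact ⟨(s, t), rfl⟩

theorem ker_contextMap_le : (contextMap S T m).ker ≤ (contextMap S T (eST lam mu 1 1)).ker := by
  rintro ⟨s, t⟩ hst
  obtain ⟨r, rfl, rfl⟩ := (h.2.1 s t).1 (sub_eq_zero.1 hst)
  simp [AddMonoidHom.mem_ker, contextMap_apply, eST_lam_one]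

/-- `s m - m t ↦ s ⊗ 1 - 1 ⊗ t`, well defined because the kernel of `contextMap S T m` is the
image of `R`. -/
noncomputable def toTensST : M →+ TensST lam mu :=
  (contextMap S T m).liftOfSurjective h.contextMap_surjective ⟨_, h.ker_contextMap_le⟩

@[simp]
theorem toTensST_contextMap (p : S × T) :
    h.toTensST (contextMap S T m p) = contextMap S T (eST lam mu 1 1) p :=
  AddMonoidHom.liftOfRightInverse_comp_apply _ _ _ _ p

theorem toTensST_smul_self (s : S) : h.toTensST (s • m) = eST lam mu s 1 := by
  simpa [contextMap_apply] using h.toTensST_contextMap (s, 0)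

theorem toTensST_op_smul_self (t : T) : h.toTensST (op t • m) = eST lam mu 1 t := by
  simpa [contextMap_apply] using h.toTensST_contextMap (0, -t)

theorem rightInverse_toTensST (γ : TensST lam mu →+ M)
    (hγ : ∀ s t, γ (eST lam mu s t) = s • op t • m) : Function.RightInverse h.toTensST γ := by
  intro x
  obtain ⟨p, rfl⟩ := h.contextMap_surjective x
  rw [toTensST_contextMap]
  simp [contextMap_apply, hγ]

theorem isExactPair (γ : TensST lam mu →+ M) (hγ : ∀ s t, γ (eST lam mu s t) = s • op t • m)
    (hγinj : Function.Injective γ) : IsExactPair lam mu := by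
  refine ⟨h.1, fun s t => ⟨fun hst => (h.2.1 s t).1 ?_, ?_⟩, fun x => ?_⟩
  · simpa [hγ] using congr(γ $hst)
  · rintro ⟨r, rfl, rfl⟩
    exact eST_lam_one r
  · obtain ⟨⟨s, t⟩, hx⟩ := h.contextMap_surjective (γ x)
    refine ⟨s, t, hγinj ?_⟩
    simp [← hx, contextMap_apply, hγ]

variable [SMulCommClass S Tᵐᵒᵖ M]

theorem toTensST_lam_smul (r : R) (x : M) : h.toTensST (lam r • x) = lam r • h.toTensST x := by
  obtain ⟨p, rfl⟩ := h.contextMap_surjective x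
  rw [lam_smul_contextMap h.lam_smul, toTensST_contextMap, toTensST_contextMap,
    lam_smul_contextMap lam_smul_eST_one_one]

theorem toTensST_op_mu_smul (r : R) (x : M) :
    h.toTensST (op (mu r) • x) = op (mu r) • h.toTensST x := by
  obtain ⟨p, rfl⟩ := h.contextMap_surjective x
  rw [op_mu_smul_contextMap h.lam_smul, toTensST_contextMap, toTensST_contextMap,
    op_mu_smul_contextMap lam_smul_eST_one_one]

theorem toTensST_smul_op_smul (hepi : lam.IsEpi ∨ mu.IsEpi) (s : S) (t : T) :
    h.toTensST (s • op t • m) = eST lam mu s t := by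
  rcases hepi with hlam | hmu
  · rw [hlam.map_smul _ h.toTensST_lam_smul, toTensST_op_smul_self]
    simp
  · rw [smul_comm, hmu.op.map_smul _ fun r => h.toTensST_op_mu_smul r.unop,
      toTensST_smul_self]
    simp

theorem leftInverse_toTensST (hepi : lam.IsEpi ∨ mu.IsEpi) (γ : TensST lam mu →+ M)
    (hγ : ∀ s t, γ (eST lam mu s t) = s • op t • m) : Function.LeftInverse h.toTensST γ := by
  intro x
  induction x using TensST.induction_on with
  | eST s t => rw [hγ, h.toTensST_smul_op_smul hepi]
  | add x y hx hy => rw [map_add, map_add, hx, hy]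

end IsExactContext

end

/-- Let `(λ, μ, M, m)` be an exact context.  If `λ` or `μ` is a ring
epimorphism, then `γ : S ⊗_R T → M`, `s ⊗ t ↦ s·m·t`, is an isomorphism of
`(S,T)`-bimodules; in particular `(λ, μ)` is an exact pair. -/
theorem stmt3 {M : Type u} [AddCommGroup M] [Module S M] [Module Tᵐᵒᵖ M]
    [SMulCommClass S Tᵐᵒᵖ M]
    (lam : R →+* S) (mu : R →+* T) (m : M)
    (hEC : IsExactContext lam mu m)
    (γ : TensST lam mu →+ M)
    (hγ : ∀ (s : S) (t : T), γ (eST lam mu s t) = s • (op t • m))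
    (hepi : (∀ (U : Type u) [Ring U], ∀ f g : S →+* U, f.comp lam = g.comp lam → f = g) ∨
            (∀ (U : Type u) [Ring U], ∀ f g : T →+* U, f.comp mu = g.comp mu → f = g)) :
    Function.Bijective γ ∧ IsExactPair lam mu := by
  have hinj := (hEC.leftInverse_toTensST hepi γ hγ).injective
  exact ⟨⟨hinj, (hEC.rightInverse_toTensST γ hγ).surjective⟩, hEC.isExactPair γ hγ hinj⟩

end
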